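/- (Sakugawa–Seki, second identity) For s = (s_1,...,s_d) positive integers, w = s_1+...+s_d, l(i) = s_1+...+s_i, variables t_1,...,t_d, and n ≥ 1: ∑_{n ≥ n_1 ≥ ... ≥ n_d ≥ 1} t_1^{n_1-n_2} ··· t_{d-1}^{n_{d-1}-n_d} t_d^{n_d} / (n_1^{s_1} ··· n_d^{s_d}) = ∑_{n ≥ n_1 ≥ ... ≥ n_w ≥ 1} (-1)^{n_1} C(n,n_1) (1-t_1)^{n_{l(1)}-n_{l(1)+1}} ··· (1-t_{d-1})^{n_{l(d-1)}-n_{l(d-1)+1}} ((1-t_d)^{n_{l(d)}} - 1) / (n_1 ··· n_w). -/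

import Mathlib

/-- Weakly decreasing chains `hi ≥ f 0 ≥ f 1 ≥ ⋯ ≥ f (d-1) ≥ lo`. -/
def chainsIcc (d lo hi : ℕ) : Finset (Fin d → ℕ) :=
  (Fintype.piFinset fun _ : Fin d => Finset.Icc lo hi).filter
    fun f => ∀ i j : Fin d, i ≤ j → f j ≤ f i

/-- `idx f j` is the paper's `n_j` (1-indexed entry of the chain `f`). -/
def idx {w : ℕ} (f : Fin w → ℕ) (j : ℕ) : ℕ :=
  if h : j - 1 < w then f ⟨j - 1, h⟩ else 0

def lsum (s : ℕ → ℕ) (i : ℕ) : ℕ := ∑ j ∈ Finset.range i, s j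

/-!
Let `E u n` be the nested sum `nestedSum (· ^ ·) u n` of a list `u` of variables, and `E' u n`
its variant `nestedSum (fun v k => v ^ k - 1) u n`. Inserting `s_i - 1` zeros before each `t_i`
gives a list `u` for which the left side is `Σ_{m=1}^n E u m / m`: a zero variable forces two
consecutive indices to agree, turning `1 / n_i` into `1 / n_i^{s_i}`. In the same way the right
side is `Σ_{m=1}^n (-1)^m C(n,m) E' (1 - u) m / m`.

So it suffices to prove the identity for an arbitrary list `u`. The recursion
`E (u :: us) (n + 1) = u E (u :: us) n + E us (n + 1) / (n + 1)` and its analogue for `E'` show,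
by induction on the list and on `n`, that `E u` is the binomial transform of `E' (1 - u)`:
`E u n = Σ_m (-1)^m C(n,m) E' (1 - u) m` for `n ≥ 1`. Summing against `1 / m` and using
`C(n+1,m)/m = C(n,m)/m + C(n+1,m)/(n+1)` gives the claim.
-/

open Finset

section Chains

lemma mem_chainsIcc {d lo hi : ℕ} {f : Fin d → ℕ} :
    f ∈ chainsIcc d lo hi ↔ (∀ i, f i ∈ Icc lo hi) ∧ Antitone f := by
  simp [chainsIcc, Antitone]

lemma cons_mem_chainsIcc {d lo hi k : ℕ} {g : Fin d → ℕ} :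
    (Fin.cons k g : Fin (d + 1) → ℕ) ∈ chainsIcc (d + 1) lo hi
      ↔ k ∈ Icc lo hi ∧ g ∈ chainsIcc d lo k := by
  simp only [mem_chainsIcc, Fin.forall_fin_succ, Fin.cons_zero, Fin.cons_succ, mem_Icc]
  constructor
  · rintro ⟨⟨hk, hg⟩, hanti⟩
    refine ⟨hk, fun i => ⟨(hg i).1, ?_⟩, fun i j hij => ?_⟩
    · simpa using hanti (Fin.zero_le i.succ)
    · simpa using hanti (Fin.succ_le_succ_iff.2 hij)
  · rintro ⟨hk, hg, hanti⟩
    refine ⟨⟨hk, fun i => ⟨(hg i).1, (hg i).2.trans hk.2⟩⟩, fun i j hij => ?_⟩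
    cases j using Fin.cases with
    | zero => rw [Fin.le_zero_iff.1 hij]
    | succ j =>
      cases i using Fin.cases with
      | zero => simpa using (hg j).2
      | succ i => simpa using hanti (Fin.succ_le_succ_iff.1 hij)

lemma sum_chainsIcc_succ {M : Type*} [AddCommMonoid M] (d lo n : ℕ)
    (H : (Fin (d + 1) → ℕ) → M) :
    ∑ f ∈ chainsIcc (d + 1) lo n, H f
      = ∑ k ∈ Icc lo n, ∑ g ∈ chainsIcc d lo k, H (Fin.cons k g) := by
  rw [← sum_sigma (Icc lo n) (chainsIcc d lo) fun p => H (Fin.cons p.1 p.2)]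
  refine sum_nbij' (fun f => ⟨f 0, Fin.tail f⟩) (fun p => Fin.cons p.1 p.2) ?_ ?_ ?_ ?_ ?_
  · intro f hf
    rw [← Fin.cons_self_tail f, cons_mem_chainsIcc] at hf
    simpa using hf
  · intro p hp
    exact cons_mem_chainsIcc.2 (mem_sigma.1 hp)
  · intro f _
    exact Fin.cons_self_tail f
  · intro p _
    simp
  · intro f _
    rw [Fin.cons_self_tail]

lemma sum_chainsIcc_zero {M : Type*} [AddCommMonoid M] (lo hi : ℕ) (H : (Fin 0 → ℕ) → M) :
    ∑ f ∈ chainsIcc 0 lo hi, H f = H Fin.elim0 := by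
  have : chainsIcc 0 lo hi = {Fin.elim0} := by
    ext f
    rw [mem_singleton, Subsingleton.elim f Fin.elim0, iff_true_right rfl, mem_chainsIcc]
    exact ⟨fun i => i.elim0, fun i => i.elim0⟩
  rw [this, sum_singleton]

lemma idx_cons_one {d : ℕ} (k : ℕ) (g : Fin d → ℕ) :
    idx (Fin.cons k g : Fin (d + 1) → ℕ) 1 = k := by
  simp [idx]

lemma idx_cons_add_two {d : ℕ} (k : ℕ) (g : Fin d → ℕ) (j : ℕ) :
    idx (Fin.cons k g : Fin (d + 1) → ℕ) (j + 2) = idx g (j + 1) := by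
  by_cases hj : j < d
  · simp only [idx, Nat.add_sub_cancel, show j + 2 - 1 = j + 1 by omega, dif_pos hj,
      dif_pos (show j + 1 < d + 1 by omega)]
    exact Fin.cons_succ (α := fun _ => ℕ) k g ⟨j, hj⟩
  · simp only [idx, Nat.add_sub_cancel, show j + 2 - 1 = j + 1 by omega, dif_neg hj,
      dif_neg (show ¬ j + 1 < d + 1 by omega)]

end Chains

lemma lsum_succ (s : ℕ → ℕ) (d : ℕ) : lsum s (d + 1) = lsum s d + s d :=
  sum_range_succ s d

lemma le_lsum {s : ℕ → ℕ} {d : ℕ} (hs : ∀ i < d, 1 ≤ s i) : d ≤ lsum s d := by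
  simpa [lsum] using card_nsmul_le_sum (range d) s 1 fun i hi => hs i (mem_range.1 hi)

lemma List.map_range_length_getD {α β : Type*} (l : List α) (x : α) (f : α → β) :
    (List.range l.length).map (fun j => f (l.getD j x)) = l.map f := by
  refine List.ext_getElem (by simp) fun j h₁ _ => ?_
  simp only [List.getElem_map, List.getElem_range]
  rw [List.getD_eq_getElem _ _ (by simpa using h₁)]

section ZeroPadded

variable {A : Type*} [Zero A]

def zeroPadded (d : ℕ) (s : ℕ → ℕ) (t : ℕ → A) : List A :=
  (List.range d).flatMap fun r => List.replicate (s r - 1) 0 ++ [t r]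

variable {d : ℕ} {s : ℕ → ℕ} (t : ℕ → A)

lemma zeroPadded_succ :
    zeroPadded (d + 1) s t = zeroPadded d s t ++ (List.replicate (s d - 1) 0 ++ [t d]) := by
  simp [zeroPadded, List.range_succ]

lemma zeroPadded_succ' :
    zeroPadded (d + 1) s t
      = List.replicate (s 0 - 1) 0 ++
          t 0 :: zeroPadded d (fun i => s (i + 1)) (fun i => t (i + 1)) := by
  simp [zeroPadded, List.range_succ_eq_map, List.flatMap_map]

lemma zeroPadded_succ_ne_nil : zeroPadded (d + 1) s t ≠ [] := by
  simp [zeroPadded_succ' t]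

lemma zeroPadded_ones (d : ℕ) : zeroPadded d (fun _ => 1) t = (List.range d).map t := by
  simp [zeroPadded, List.map_eq_flatMap]

lemma length_zeroPadded (hs : ∀ i < d, 1 ≤ s i) : (zeroPadded d s t).length = lsum s d := by
  induction d with
  | zero => simp [zeroPadded, lsum]
  | succ d ih =>
    rw [zeroPadded_succ, List.length_append, ih fun i hi => hs i (by omega), lsum_succ]
    have := hs d (by omega)
    simp only [List.length_append, List.length_replicate, List.length_singleton]
    omega

lemma getD_replicate_zero_append_singleton (k i : ℕ) (x : A) :
    (List.replicate k 0 ++ [x]).getD i 0 = if i = k then x else 0 := by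
  rcases lt_trichotomy i k with h | rfl | h
  · rw [List.getD_append _ _ _ _ (by simpa), List.getD_replicate (h := h), if_neg h.ne]
  · simp
  · rw [List.getD_eq_default _ _ (by simpa), if_neg h.ne']

lemma getD_zeroPadded_succ_of_lt (hs : ∀ i < d, 1 ≤ s i) {j : ℕ} (hj : j < lsum s d) :
    (zeroPadded (d + 1) s t).getD j 0 = (zeroPadded d s t).getD j 0 := by
  rw [zeroPadded_succ, List.getD_append _ _ _ _ (by rwa [length_zeroPadded t hs])]

lemma getD_zeroPadded_succ_lsum_add (hs : ∀ i < d, 1 ≤ s i) (i : ℕ) :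
    (zeroPadded (d + 1) s t).getD (lsum s d + i) 0 = if i = s d - 1 then t d else 0 := by
  rw [zeroPadded_succ, List.getD_append_right _ _ _ _ (by simp [length_zeroPadded t hs]),
    length_zeroPadded t hs, Nat.add_sub_cancel_left, getD_replicate_zero_append_singleton]

lemma getD_zeroPadded_lsum_sub_one (hs : ∀ i < d + 1, 1 ≤ s i) :
    (zeroPadded (d + 1) s t).getD (lsum s (d + 1) - 1) 0 = t d := by
  rw [lsum_succ, Nat.add_sub_assoc (hs d d.lt_succ_self),
    getD_zeroPadded_succ_lsum_add t fun i hi => hs i (by omega), if_pos rfl]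

end ZeroPadded

section ProdZeroPadded

variable {M : Type*} [CommMonoidWithZero M] {d : ℕ} {s : ℕ → ℕ} (t : ℕ → M)
  {g : ℕ → M → M} (hg : ∀ j, g j 0 = 1)
include hg

lemma prod_range_lsum_getD_zeroPadded (hs : ∀ i < d, 1 ≤ s i) :
    ∏ j ∈ range (lsum s d), g j ((zeroPadded d s t).getD j 0)
      = ∏ r ∈ range d, g (lsum s (r + 1) - 1) (t r) := by
  induction d with
  | zero => simp [lsum]
  | succ d ih =>
    have hs' : ∀ i < d, 1 ≤ s i := fun i hi => hs i (by omega)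
    rw [lsum_succ, prod_range_add, prod_range_succ, ← ih hs']
    congr 1
    · exact prod_congr rfl fun j hj =>
        by rw [getD_zeroPadded_succ_of_lt t hs' (mem_range.1 hj)]
    · simp_rw [getD_zeroPadded_succ_lsum_add t hs', apply_ite (g _), hg, prod_ite_eq', mem_range,
        Nat.sub_lt (hs d (by omega)) one_pos, if_true, lsum_succ,
        Nat.add_sub_assoc (hs d (by omega))]

lemma prod_range_lsum_sub_one_getD_zeroPadded (hs : ∀ i < d + 1, 1 ≤ s i) :
    ∏ j ∈ range (lsum s (d + 1) - 1), g j ((zeroPadded (d + 1) s t).getD j 0)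
      = ∏ r ∈ range d, g (lsum s (r + 1) - 1) (t r) := by
  have hs' : ∀ i < d, 1 ≤ s i := fun i hi => hs i (by omega)
  have hzero : ∀ i ∈ range (s d - 1),
      g (lsum s d + i) ((zeroPadded (d + 1) s t).getD (lsum s d + i) 0) = 1 := fun i hi => by
    rw [getD_zeroPadded_succ_lsum_add t hs', if_neg (mem_range.1 hi).ne, hg]
  rw [lsum_succ, Nat.add_sub_assoc (hs d d.lt_succ_self), prod_range_add, prod_eq_one hzero,
    mul_one, ← prod_range_lsum_getD_zeroPadded t hg hs']
  exact prod_congr rfl fun j hj => by rw [getD_zeroPadded_succ_of_lt t hs' (mem_range.1 hj)]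

end ProdZeroPadded

section BinomialTransform

variable {M : Type*} [AddCommGroup M] [Module ℚ M]

def binomialTransform (g : ℕ → M) (n : ℕ) : M :=
  ∑ m ∈ range (n + 1), ((-1 : ℚ) ^ m * n.choose m) • g m

lemma binomialTransform_zero (g : ℕ → M) : binomialTransform g 0 = g 0 := by
  simp [binomialTransform]

lemma binomialTransform_eq_sum_Icc {g : ℕ → M} (hg : g 0 = 0) (n : ℕ) :
    binomialTransform g n = ∑ m ∈ Icc 1 n, ((-1 : ℚ) ^ m * n.choose m) • g m := by
  rw [binomialTransform, range_eq_Ico, sum_eq_sum_Ico_succ_bot (by omega), hg, smul_zero,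
    zero_add, zero_add, Ico_add_one_right_eq_Icc]

lemma binomialTransform_succ (g : ℕ → M) (n : ℕ) :
    binomialTransform g (n + 1)
      = binomialTransform g n - binomialTransform (fun m => g (m + 1)) n := by
  have hpascal : ∀ j ∈ range (n + 1),
      ((-1 : ℚ) ^ (j + 1) * (n + 1).choose (j + 1)) • g (j + 1)
        = ((-1 : ℚ) ^ (j + 1) * n.choose (j + 1)) • g (j + 1)
          - ((-1 : ℚ) ^ j * n.choose j) • g (j + 1) := by
    intro j _
    rw [Nat.choose_succ_succ', pow_succ]
    push_cast
    module
  have hshift : binomialTransform g n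
      = ∑ j ∈ range (n + 1), ((-1 : ℚ) ^ (j + 1) * n.choose (j + 1)) • g (j + 1) + g 0 := by
    rw [binomialTransform, sum_range_succ', sum_range_succ _ n]
    simp
  rw [binomialTransform, sum_range_succ', sum_congr rfl hpascal, sum_sub_distrib, hshift,
    binomialTransform]
  simp only [pow_zero, Nat.choose_zero_right, Nat.cast_one, mul_one, one_smul]
  abel

lemma binomialTransform_const (c : M) (n : ℕ) :
    binomialTransform (fun _ => c) n = if n = 0 then c else 0 := by
  have h : ∑ m ∈ range (n + 1), ((-1 : ℚ) ^ m * n.choose m) = if n = 0 then 1 else 0 := by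
    exact_mod_cast Int.alternating_sum_range_choose (n := n)
  rw [binomialTransform, ← sum_smul, h]
  split_ifs <;> simp

lemma cast_choose_mul_inv_succ (n j : ℕ) :
    (n.choose j : ℚ) * ((j + 1 : ℕ) : ℚ)⁻¹
      = ((n + 1).choose (j + 1) : ℚ) * ((n + 1 : ℕ) : ℚ)⁻¹ := by
  have h : ((n + 1 : ℕ) : ℚ) * n.choose j = (n + 1).choose (j + 1) * ((j + 1 : ℕ) : ℚ) := by
    exact_mod_cast Nat.add_one_mul_choose_eq n j
  field_simp
  linear_combination h

lemma binomialTransform_inv_smul_shift (b : ℕ → M) (n : ℕ) :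
    binomialTransform (fun m => ((m + 1 : ℕ) : ℚ)⁻¹ • b (m + 1)) n
      = -((n + 1 : ℕ) : ℚ)⁻¹ • (binomialTransform b (n + 1) - b 0) := by
  rw [binomialTransform, binomialTransform, sum_range_succ' _ (n + 1)]
  simp only [pow_zero, Nat.choose_zero_right, Nat.cast_one, mul_one, one_smul,
    add_sub_cancel_right, smul_sum]
  refine sum_congr rfl fun j _ => ?_
  rw [smul_smul, smul_smul, mul_assoc, cast_choose_mul_inv_succ, pow_succ]
  congr 1
  ring

lemma sum_Icc_inv_smul_binomialTransform {a : ℕ → M} (ha : a 0 = 0) (n : ℕ) :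
    ∑ m ∈ Icc 1 n, (m : ℚ)⁻¹ • binomialTransform a m
      = ∑ m ∈ Icc 1 n, ((-1 : ℚ) ^ m * n.choose m * (m : ℚ)⁻¹) • a m := by
  induction n with
  | zero => simp
  | succ n ih =>
    have hsplit : ∀ m ∈ Icc 1 (n + 1),
        ((-1 : ℚ) ^ m * (n + 1).choose m * (m : ℚ)⁻¹) • a m
          = ((-1 : ℚ) ^ m * n.choose m * (m : ℚ)⁻¹) • a m
            + ((n + 1 : ℕ) : ℚ)⁻¹ • (((-1 : ℚ) ^ m * (n + 1).choose m) • a m) := by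
      intro m hm
      obtain ⟨j, rfl⟩ : ∃ j, m = j + 1 := ⟨m - 1, by have := (mem_Icc.1 hm).1; omega⟩
      rw [smul_smul, ← add_smul]
      congr 1
      have hdiv := cast_choose_mul_inv_succ n j
      have hpascal : ((n + 1).choose (j + 1) : ℚ) = n.choose j + n.choose (j + 1) := by
        exact_mod_cast Nat.choose_succ_succ' n j
      push_cast at hdiv ⊢
      linear_combination (-1 : ℚ) ^ (j + 1) * ((j + 1 : ℚ)⁻¹ * hpascal + hdiv)
    rw [sum_Icc_succ_top (by omega), ih, sum_congr rfl hsplit, sum_add_distrib, ← smul_sum,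
      ← binomialTransform_eq_sum_Icc ha, sum_Icc_succ_top (by omega) (fun m => _ • a m)]
    simp

end BinomialTransform

section NestedSum

variable {A : Type*} [CommRing A] [Algebra ℚ A]

/-- `nestedSum β [u₁, …, u_w] n` is
`Σ_{n = n₁ ≥ n₂ ≥ ⋯ ≥ n_w ≥ 1} u₁^{n₁-n₂} ⋯ u_{w-1}^{n_{w-1}-n_w} β u_w n_w / (n₂ ⋯ n_w)`. -/
noncomputable def nestedSum (β : A → ℕ → A) : List A → ℕ → A
  | [], _ => 0
  | [u], n => β u n
  | u :: v :: us, n => ∑ m ∈ Icc 1 n, (m : ℚ)⁻¹ • (u ^ (n - m) * nestedSum β (v :: us) m)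

variable (β : A → ℕ → A)

@[simp] lemma nestedSum_singleton (u : A) (n : ℕ) : nestedSum β [u] n = β u n := rfl

lemma nestedSum_cons (u : A) {us : List A} (hus : us ≠ []) (n : ℕ) :
    nestedSum β (u :: us) n
      = ∑ m ∈ Icc 1 n, (m : ℚ)⁻¹ • (u ^ (n - m) * nestedSum β us m) := by
  obtain ⟨v, us, rfl⟩ := List.exists_cons_of_ne_nil hus
  rfl

lemma nestedSum_cons_zero (u : A) {us : List A} (hus : us ≠ []) :
    nestedSum β (u :: us) 0 = 0 := by
  simp [nestedSum_cons β u hus]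

lemma nestedSum_cons_succ (u : A) {us : List A} (hus : us ≠ []) (n : ℕ) :
    nestedSum β (u :: us) (n + 1)
      = u * nestedSum β (u :: us) n + ((n + 1 : ℕ) : ℚ)⁻¹ • nestedSum β us (n + 1) := by
  rw [nestedSum_cons β u hus, nestedSum_cons β u hus, sum_Icc_succ_top (by omega), mul_sum]
  congr 1
  · refine sum_congr rfl fun m hm => ?_
    rw [mul_smul_comm, ← mul_assoc, ← pow_succ', Nat.sub_add_comm (mem_Icc.1 hm).2]
  · simp

lemma nestedSum_zero_cons {us : List A} (hus : us ≠ []) {n : ℕ} (hn : n ≠ 0) :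
    nestedSum β (0 :: us) n = (n : ℚ)⁻¹ • nestedSum β us n := by
  rw [nestedSum_cons β 0 hus, sum_eq_single_of_mem n (mem_Icc.2 ⟨Nat.one_le_iff_ne_zero.2 hn, le_rfl⟩)]
  · simp
  · intro m hm hmn
    rw [zero_pow (by have := (mem_Icc.1 hm).2; omega), zero_mul, smul_zero]

lemma nestedSum_replicate_zero_append (a : ℕ) {us : List A} (hus : us ≠ []) {n : ℕ}
    (hn : n ≠ 0) :
    nestedSum β (List.replicate a 0 ++ us) n = ((n : ℚ) ^ a)⁻¹ • nestedSum β us n := by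
  induction a with
  | zero => simp
  | succ a ih =>
    rw [List.replicate_succ, List.cons_append, nestedSum_zero_cons β (by simp [hus]) hn, ih,
      smul_smul, pow_succ, mul_inv, mul_comm]

lemma inv_smul_nestedSum_zeroPadded_succ {d : ℕ} {S : ℕ → ℕ} (T : ℕ → A) (hS : 1 ≤ S 0) {k : ℕ}
    (hk : k ≠ 0) :
    (k : ℚ)⁻¹ • nestedSum β (zeroPadded (d + 1) S T) k
      = ((k : ℚ) ^ S 0)⁻¹
          • nestedSum β (T 0 :: zeroPadded d (fun i => S (i + 1)) (fun i => T (i + 1))) k := by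
  rw [zeroPadded_succ', nestedSum_replicate_zero_append β _ (List.cons_ne_nil _ _) hk, smul_smul,
    ← mul_inv, ← pow_succ', Nat.sub_add_cancel hS]

end NestedSum

section Inversion

variable {A : Type*} [CommRing A] [Algebra ℚ A]

lemma nestedSum_pow_sub_one_zero {vs : List A} (hvs : vs ≠ []) :
    nestedSum (fun v k => v ^ k - 1) vs 0 = 0 := by
  obtain ⟨v, vs, rfl⟩ := List.exists_cons_of_ne_nil hvs
  rcases eq_or_ne vs [] with rfl | hvs
  · simp
  · exact nestedSum_cons_zero _ v hvs

lemma binomialTransform_succ_of_rec {u : A} {a c : ℕ → A}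
    (hrec : ∀ m, a (m + 1) = (1 - u) * a m + c m) (n : ℕ) :
    binomialTransform a (n + 1) = u * binomialTransform a n - binomialTransform c n := by
  have hshift : binomialTransform (fun m => a (m + 1)) n
      = (1 - u) * binomialTransform a n + binomialTransform c n := by
    simp only [binomialTransform, hrec, smul_add, mul_sum, mul_smul_comm, sum_add_distrib]
  rw [binomialTransform_succ, hshift]
  ring

lemma binomialTransform_nestedSum (us : List A) (hus : us ≠ []) (n : ℕ) :
    binomialTransform (nestedSum (fun v k => v ^ k - 1) (us.map (1 - ·))) n
      = if n = 0 then 0 else nestedSum (· ^ ·) us n := by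
  induction us generalizing n with
  | nil => contradiction
  | cons u us ih =>
    induction n with
    | zero =>
      rw [binomialTransform_zero, nestedSum_pow_sub_one_zero (by simp), if_pos rfl]
    | succ n ihn =>
      rw [if_neg n.succ_ne_zero]
      rcases eq_or_ne us [] with rfl | hus
      · have hrec (m : ℕ) : (1 - u) ^ (m + 1) - 1 = (1 - u) * ((1 - u) ^ m - 1) + -u := by ring
        rw [binomialTransform_succ_of_rec hrec, ihn, binomialTransform_const]
        split_ifs with hn <;> simp [hn, pow_succ']
      · have hvs : us.map (1 - ·) ≠ [] := by simpa using hus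
        rw [List.map_cons] at ihn ⊢
        rw [binomialTransform_succ_of_rec (fun m => nestedSum_cons_succ _ (1 - u) hvs m),
          binomialTransform_inv_smul_shift, ih hus, nestedSum_pow_sub_one_zero hvs, sub_zero,
          if_neg n.succ_ne_zero, ihn, nestedSum_cons_succ _ u hus]
        split_ifs with hn
        · simp [hn, nestedSum_cons_zero _ u hus]
        · simp

lemma sum_Icc_inv_smul_nestedSum (us : List A) (hus : us ≠ []) (n : ℕ) :
    ∑ m ∈ Icc 1 n, (m : ℚ)⁻¹ • nestedSum (· ^ ·) us m
      = ∑ m ∈ Icc 1 n, ((-1 : ℚ) ^ m * n.choose m * (m : ℚ)⁻¹)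
          • nestedSum (fun v k => v ^ k - 1) (us.map (1 - ·)) m := by
  rw [← sum_Icc_inv_smul_binomialTransform (nestedSum_pow_sub_one_zero (by simpa using hus))]
  refine sum_congr rfl fun m hm => ?_
  rw [binomialTransform_nestedSum us hus, if_neg (by have := (mem_Icc.1 hm).1; omega)]

end Inversion

section ChainSums

variable {A : Type*} [CommRing A] [Algebra ℚ A]

/-- `φ` is the factor `T₀^{k - m}` that the enclosing level contributes in the induction. -/
theorem sum_chainsIcc_eq_sum_nestedSum (β : A → ℕ → A) (d : ℕ) (S : ℕ → ℕ) (T φ : ℕ → A)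
    (n : ℕ) (hS : ∀ i ≤ d, 1 ≤ S i) :
    ∑ f ∈ chainsIcc (d + 1) 1 n,
        (∏ j ∈ range (d + 1), (idx f (j + 1) : ℚ) ^ S j)⁻¹ •
          (φ (idx f 1) *
            ((∏ j ∈ range d, T j ^ (idx f (j + 1) - idx f (j + 2))) * β (T d) (idx f (d + 1))))
      = ∑ k ∈ Icc 1 n, (k : ℚ)⁻¹ • (φ k * nestedSum β (zeroPadded (d + 1) S T) k) := by
  induction d generalizing S T φ n with
  | zero =>
    rw [sum_chainsIcc_succ]
    refine sum_congr rfl fun k hk => ?_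
    rw [sum_chainsIcc_zero, ← mul_smul_comm _ (φ k), inv_smul_nestedSum_zeroPadded_succ β T
      (hS 0 le_rfl) (Nat.one_le_iff_ne_zero.1 (mem_Icc.1 hk).1)]
    simp [idx_cons_one, zeroPadded]
  | succ d ih =>
    rw [sum_chainsIcc_succ]
    refine sum_congr rfl fun k hk => ?_
    have hinner := ih (fun i => S (i + 1)) (fun i => T (i + 1)) (fun m => T 0 ^ (k - m)) k
      fun i hi => hS (i + 1) (by omega)
    rw [← mul_smul_comm _ (φ k), inv_smul_nestedSum_zeroPadded_succ β T (hS 0 (by omega))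
      (Nat.one_le_iff_ne_zero.1 (mem_Icc.1 hk).1), nestedSum_cons β _ (zeroPadded_succ_ne_nil _),
      ← hinner, smul_sum, mul_sum]
    refine sum_congr rfl fun g _ => ?_
    rw [prod_range_succ' (fun j => (idx (Fin.cons k g) (j + 1) : ℚ) ^ S j),
      prod_range_succ' (fun j => T j ^ (idx (Fin.cons k g) (j + 1) - idx (Fin.cons k g) (j + 2)))]
    simp only [zero_add, idx_cons_one, idx_cons_add_two, Algebra.smul_def, mul_inv, map_mul]
    ring

lemma sum_chainsIcc_lsum_eq_sum_nestedSum {d : ℕ} {s : ℕ → ℕ} (hs : ∀ i < d + 1, 1 ≤ s i)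
    (t : ℕ → A) (n : ℕ) :
    ∑ f ∈ chainsIcc (lsum s (d + 1)) 1 n,
        (((-1 : ℚ) ^ (idx f 1) * (n.choose (idx f 1) : ℚ)) *
            (∏ j ∈ range (lsum s (d + 1)), (idx f (j + 1) : ℚ))⁻¹) •
          ((∏ r ∈ range d,
              (1 - t r) ^ (idx f (lsum s (r + 1)) - idx f (lsum s (r + 1) + 1))) *
            ((1 - t d) ^ (idx f (lsum s (d + 1))) - 1))
      = ∑ k ∈ Icc 1 n, ((-1 : ℚ) ^ k * n.choose k * (k : ℚ)⁻¹)
          • nestedSum (fun v k => v ^ k - 1) ((zeroPadded (d + 1) s t).map (1 - ·)) k := by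
  obtain ⟨w, hw⟩ : ∃ w, lsum s (d + 1) = w + 1 :=
    ⟨lsum s (d + 1) - 1, by have := le_lsum hs; omega⟩
  have hvars : (List.range (w + 1)).map (fun j => 1 - (zeroPadded (d + 1) s t).getD j 0)
      = (zeroPadded (d + 1) s t).map (1 - ·) := by
    rw [← hw, ← length_zeroPadded t hs, List.map_range_length_getD]
  have hbridge := sum_chainsIcc_eq_sum_nestedSum (fun v k => v ^ k - 1) w (fun _ => 1)
    (fun j => 1 - (zeroPadded (d + 1) s t).getD j 0)
    (fun k => algebraMap ℚ A ((-1) ^ k * n.choose k)) n fun _ _ => le_rfl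
  rw [zeroPadded_ones, hvars] at hbridge
  have hcoeff : ∀ (c r : ℚ) (x : A), (c * r) • x = r • (algebraMap ℚ A c * x) :=
    fun c r x => by rw [← Algebra.smul_def, smul_smul, mul_comm]
  rw [hw]
  simp only [hcoeff, ← hbridge]
  refine sum_congr rfl fun f _ => ?_
  have hprod := prod_range_lsum_sub_one_getD_zeroPadded t
    (g := fun j x => (1 - x) ^ (idx f (j + 1) - idx f (j + 2))) (fun j => by simp) hs
  have hlast := getD_zeroPadded_lsum_sub_one t hs
  simp only [hw, Nat.add_sub_cancel] at hprod hlast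
  rw [hprod, hlast]
  simp only [pow_one]
  congr 3
  refine prod_congr rfl fun r hr => ?_
  have := le_lsum (s := s) (d := r + 1) fun i hi => hs i (by have := mem_range.1 hr; omega)
  rw [show lsum s (r + 1) - 1 + 1 = lsum s (r + 1) by omega,
    show lsum s (r + 1) - 1 + 2 = lsum s (r + 1) + 1 by omega]

end ChainSums

theorem sakugawa_seki_second_general {A : Type*} [CommRing A] [Algebra ℚ A]
    (d : ℕ) (hd : 1 ≤ d) (s : ℕ → ℕ) (hs : ∀ i < d, 1 ≤ s i)
    (t : ℕ → A) (n : ℕ) :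
    ∑ m ∈ chainsIcc d 1 n,
        (∏ j ∈ Finset.range d, (idx m (j + 1) : ℚ) ^ s j)⁻¹ •
          ((∏ j ∈ Finset.range (d - 1), t j ^ (idx m (j + 1) - idx m (j + 2))) *
            t (d - 1) ^ (idx m d))
      = ∑ f ∈ chainsIcc (lsum s d) 1 n,
          (((-1 : ℚ) ^ (idx f 1) * (n.choose (idx f 1) : ℚ)) *
              (∏ j ∈ Finset.range (lsum s d), (idx f (j + 1) : ℚ))⁻¹) •
            ((∏ r ∈ Finset.range (d - 1),
                (1 - t r) ^ (idx f (lsum s (r + 1)) - idx f (lsum s (r + 1) + 1))) *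
              ((1 - t (d - 1)) ^ (idx f (lsum s d)) - 1)) := by
  obtain ⟨d, rfl⟩ : ∃ d', d = d' + 1 := ⟨d - 1, by omega⟩
  have hpow := sum_chainsIcc_eq_sum_nestedSum (· ^ ·) d s t 1 n fun i hi => hs i (by omega)
  simp only [Pi.one_apply, one_mul] at hpow
  rw [Nat.add_sub_cancel, hpow, sum_chainsIcc_lsum_eq_sum_nestedSum hs,
    sum_Icc_inv_smul_nestedSum _ (zeroPadded_succ_ne_nil t)]

theorem sakugawa_seki_second {A : Type*} [CommRing A] [Algebra ℚ A]
    (d : ℕ) (hd : 1 ≤ d) (s : ℕ → ℕ) (hs : ∀ i < d, 1 ≤ s i)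
    (t : ℕ → A) (n : ℕ) (hn : 1 ≤ n) :
    ∑ m ∈ chainsIcc d 1 n,
        (∏ j ∈ Finset.range d, (idx m (j + 1) : ℚ) ^ s j)⁻¹ •
          ((∏ j ∈ Finset.range (d - 1), t j ^ (idx m (j + 1) - idx m (j + 2))) *
            t (d - 1) ^ (idx m d))
      = ∑ f ∈ chainsIcc (lsum s d) 1 n,
          (((-1 : ℚ) ^ (idx f 1) * (n.choose (idx f 1) : ℚ)) *
              (∏ j ∈ Finset.range (lsum s d), (idx f (j + 1) : ℚ))⁻¹) •
            ((∏ r ∈ Finset.range (d - 1),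
                (1 - t r) ^ (idx f (lsum s (r + 1)) - idx f (lsum s (r + 1) + 1))) *
              ((1 - t (d - 1)) ^ (idx f (lsum s d)) - 1)) :=
  sakugawa_seki_second_general d hd s hs t n
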